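/- arXiv:1204.2604 — 4 statements merged into one kernel-verified Lean document; each statement's English description precedes it below -/
import Mathlib

section
/- For n ≥ 3, the star K_{1,n−1} satisfies ξ(K_{1,n−1}) = (n−1)(n−2), and it is the unique graph attaining the upper bound: if G is a connected simple graph on n ≥ 3 vertices with ξ(G) = (n−1)(n−2), then G is isomorphic to the star K_{1,n−1}. -/
open Finset

namespace Forwarding

variable {V : Type*} [Fintype V] [DecidableEq V]

/-- A routing of a graph `G`: for every ordered pair of vertices, a fixed path.
(For `x = y` the path condition forces the trivial walk, so only the
`n(n-1)` paths between distinct vertices matter.) -/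
structure Routing (G : SimpleGraph V) where
  walk : ∀ x y : V, G.Walk x y
  isPath : ∀ x y : V, (walk x y).IsPath

/-- A routing is minimal if every specified path is a shortest path. -/
def Routing.IsMinimal {G : SimpleGraph V} (R : Routing G) : Prop :=
  ∀ x y : V, (R.walk x y).length = G.dist x y

/-- The load of a vertex `x`: the number of paths of the routing passing
through `x` as an internal vertex. -/
def vertexLoad {G : SimpleGraph V} (R : Routing G) (x : V) : ℕ :=
  (univ.filter fun p : V × V =>
    p.1 ≠ p.2 ∧ x ∈ (R.walk p.1 p.2).support ∧ x ≠ p.1 ∧ x ≠ p.2).card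

/-- The load of an edge `e`: the number of paths of the routing traversing `e`. -/
def edgeLoad {G : SimpleGraph V} (R : Routing G) (e : Sym2 V) : ℕ :=
  (univ.filter fun p : V × V => p.1 ≠ p.2 ∧ e ∈ (R.walk p.1 p.2).edges).card

/-- `ξ(G,R)`: the maximum vertex load of the routing `R`. -/
def routingVertexIndex {G : SimpleGraph V} (R : Routing G) : ℕ :=
  univ.sup (vertexLoad R)

/-- `π(G,R)`: the maximum edge load of the routing `R`. (Edges not in `G`
carry load `0`, so taking the `sup` over all of `Sym2 V` is equivalent.) -/
def routingEdgeIndex {G : SimpleGraph V} (R : Routing G) : ℕ :=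
  univ.sup (edgeLoad R)

/-- The vertex-forwarding index `ξ(G)`. -/
noncomputable def xi (G : SimpleGraph V) : ℕ :=
  sInf { k | ∃ R : Routing G, routingVertexIndex R = k }

/-- The vertex-forwarding index over minimal routings, `ξ_m(G)`. -/
noncomputable def xiMin (G : SimpleGraph V) : ℕ :=
  sInf { k | ∃ R : Routing G, R.IsMinimal ∧ routingVertexIndex R = k }

/-- The edge-forwarding index `π(G)`. -/
noncomputable def piIdx (G : SimpleGraph V) : ℕ :=
  sInf { k | ∃ R : Routing G, routingEdgeIndex R = k }

/-- The edge-forwarding index over minimal routings, `π_m(G)`. -/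
noncomputable def piMinIdx (G : SimpleGraph V) : ℕ :=
  sInf { k | ∃ R : Routing G, R.IsMinimal ∧ routingEdgeIndex R = k }

end Forwarding

/-- The star `K_{1,n-1}` with center `c`. -/
def starGraph {V : Type*} (c : V) : SimpleGraph V where
  Adj x y := x ≠ y ∧ (x = c ∨ y = c)
  symm := ⟨fun x y h => ⟨h.1.symm, h.2.symm⟩⟩
  loopless := ⟨fun x h => h.1 rfl⟩

/-!
A vertex `x` is internal to at most the `(n-1)(n-2)` paths joining ordered pairs of distinct
vertices other than `x`, so `ξ(G) ≤ (n-1)(n-2)`. In the star every path between two leaves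
passes through the center, so the center carries this load in every routing. Conversely, if
`ξ(G) = (n-1)(n-2)` then in a shortest-path routing some vertex `x` lies inside every path
avoiding `x` at its ends; such a path between adjacent vertices is a single edge, so no two
vertices other than `x` are adjacent, and connectedness makes `G` the star centered at `x`.
-/

section Star

variable {V : Type*}

theorem starGraph_eq_simpleGraph_starGraph (c : V) : starGraph c = SimpleGraph.starGraph c := by
  ext x y
  rw [SimpleGraph.starGraph_adj]
  rfl

theorem starGraph_connected (c : V) : (starGraph c).Connected :=
  starGraph_eq_simpleGraph_starGraph c ▸ SimpleGraph.connected_starGraph c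

theorem starGraph_center_mem_support {c x y : V} (hx : x ≠ c) (hxy : x ≠ y)
    (w : (starGraph c).Walk x y) : c ∈ w.support := by
  have hsnd : w.snd = c := (w.adj_snd (w.not_nil_of_ne hxy)).2.resolve_left hx
  have hmem := w.getVert_mem_support 1
  rwa [show w.getVert 1 = c from hsnd] at hmem

theorem eq_starGraph_of_forall_not_adj {G : SimpleGraph V} {x : V} (hG : G.Preconnected)
    (h : ∀ u v, u ≠ x → v ≠ x → ¬G.Adj u v) : G = starGraph x := by
  have adj_center (v : V) (hv : v ≠ x) : G.Adj v x := by
    have : Nontrivial V := ⟨⟨v, x, hv⟩⟩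
    obtain ⟨u, hvu⟩ := hG.exists_adj_of_nontrivial v
    obtain rfl : u = x := by_contra fun hu => h v u hv hu hvu
    exact hvu
  ext a b
  refine ⟨fun hab => ⟨hab.ne, ?_⟩, ?_⟩
  · by_contra! hab'
    exact h a b hab'.1 hab'.2 hab
  · rintro ⟨hab, rfl | rfl⟩
    · exact (adj_center b hab.symm).symm
    · exact adj_center a hab

end Star

namespace Forwarding

open Finset

variable {V : Type*} {G : SimpleGraph V}

noncomputable def Routing.geodesic (hG : G.Connected) : Routing G where
  walk u v := (hG.exists_path_of_dist u v).choose
  isPath u v := (hG.exists_path_of_dist u v).choose_spec.1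

theorem Routing.geodesic_isMinimal (hG : G.Connected) : (Routing.geodesic hG).IsMinimal :=
  fun u v => (hG.exists_path_of_dist u v).choose_spec.2

theorem Routing.IsMinimal.walk_eq_toWalk {R : Routing G} (hR : R.IsMinimal) {u v : V}
    (h : G.Adj u v) : R.walk u v = h.toWalk :=
  SimpleGraph.Walk.eq_of_length_le_one (by rw [hR, SimpleGraph.dist_eq_one_iff_adj.2 h])
    (by simp)

theorem Routing.IsMinimal.not_adj_of_forall_mem_support {R : Routing G} (hR : R.IsMinimal)
    {x : V} (hx : ∀ u v, u ≠ x → v ≠ x → u ≠ v → x ∈ (R.walk u v).support) :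
    ∀ u v, u ≠ x → v ≠ x → ¬G.Adj u v := by
  intro u v hu hv h
  have hmem := hx u v hu hv h.ne
  rw [hR.walk_eq_toWalk h] at hmem
  simp only [SimpleGraph.Walk.support_cons, SimpleGraph.Walk.support_nil, List.mem_cons,
    List.not_mem_nil, or_false] at hmem
  rcases hmem with rfl | rfl <;> contradiction

variable [Fintype V] [DecidableEq V]

theorem card_offDiag_erase (x : V) :
    #(univ.erase x).offDiag = (Fintype.card V - 1) * (Fintype.card V - 2) := by
  rw [offDiag_card, card_erase_of_mem (mem_univ x), card_univ, ← Nat.mul_sub_one]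
  rfl

theorem filter_internal_subset_offDiag_erase (R : Routing G) (x : V) :
    (univ.filter fun p : V × V =>
      p.1 ≠ p.2 ∧ x ∈ (R.walk p.1 p.2).support ∧ x ≠ p.1 ∧ x ≠ p.2)
      ⊆ (univ.erase x).offDiag := by
  intro p hp
  simp only [mem_filter, mem_univ, true_and] at hp
  simp only [mem_offDiag, mem_erase, mem_univ, and_true]
  exact ⟨hp.2.2.1.symm, hp.2.2.2.symm, hp.1⟩

theorem vertexLoad_le (R : Routing G) (x : V) :
    vertexLoad R x ≤ (Fintype.card V - 1) * (Fintype.card V - 2) :=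
  card_offDiag_erase x ▸ card_le_card (filter_internal_subset_offDiag_erase R x)

theorem vertexLoad_eq_iff (R : Routing G) (x : V) :
    vertexLoad R x = (Fintype.card V - 1) * (Fintype.card V - 2) ↔
      ∀ u v, u ≠ x → v ≠ x → u ≠ v → x ∈ (R.walk u v).support := by
  have hsub := filter_internal_subset_offDiag_erase R x
  rw [← card_offDiag_erase x, vertexLoad, ← (card_le_card hsub).ge_iff_eq,
    eq_iff_card_le_of_subset hsub, Subset.antisymm_iff, and_iff_right hsub]
  simp only [subset_iff, mem_offDiag, mem_erase, mem_univ, and_true, mem_filter, true_and,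
    Prod.forall]
  exact ⟨fun h u v hu hv huv => (h u v ⟨hu, hv, huv⟩).2.1,
    fun h u v ⟨hu, hv, huv⟩ => ⟨huv, h u v hu hv huv, hu.symm, hv.symm⟩⟩

theorem routingVertexIndex_le (R : Routing G) :
    routingVertexIndex R ≤ (Fintype.card V - 1) * (Fintype.card V - 2) :=
  Finset.sup_le fun x _ => vertexLoad_le R x

theorem xi_le_routingVertexIndex (R : Routing G) : xi G ≤ routingVertexIndex R :=
  Nat.sInf_le ⟨R, rfl⟩

theorem exists_routingVertexIndex_eq_xi (hG : G.Connected) :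
    ∃ R : Routing G, routingVertexIndex R = xi G :=
  Nat.sInf_mem (s := {k | ∃ R : Routing G, routingVertexIndex R = k})
    ⟨_, Routing.geodesic hG, rfl⟩

theorem vertexLoad_starGraph_center {c : V} (R : Routing (starGraph c)) :
    vertexLoad R c = (Fintype.card V - 1) * (Fintype.card V - 2) :=
  (vertexLoad_eq_iff R c).2 fun _ _ hu _ huv => starGraph_center_mem_support hu huv _

theorem xi_starGraph (c : V) :
    xi (starGraph c) = (Fintype.card V - 1) * (Fintype.card V - 2) := by
  obtain ⟨R, hR⟩ := exists_routingVertexIndex_eq_xi (starGraph_connected c)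
  rw [← hR]
  exact (routingVertexIndex_le R).antisymm
    ((vertexLoad_starGraph_center R).ge.trans (le_sup (mem_univ c)))

theorem exists_vertexLoad_eq_of_xi_eq (hG : G.Connected)
    (h : xi G = (Fintype.card V - 1) * (Fintype.card V - 2)) (R : Routing G) :
    ∃ x, vertexLoad R x = (Fintype.card V - 1) * (Fintype.card V - 2) := by
  have : Nonempty V := hG.nonempty
  obtain ⟨x, -, hx⟩ := exists_mem_eq_sup univ univ_nonempty (vertexLoad R)
  exact ⟨x, (vertexLoad_le R x).antisymm (h ▸ hx ▸ xi_le_routingVertexIndex R)⟩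

theorem exists_eq_starGraph_of_xi_eq (hG : G.Connected)
    (h : xi G = (Fintype.card V - 1) * (Fintype.card V - 2)) : ∃ x, G = starGraph x := by
  have hR := Routing.geodesic_isMinimal hG
  obtain ⟨x, hx⟩ := exists_vertexLoad_eq_of_xi_eq hG h (Routing.geodesic hG)
  exact ⟨x, eq_starGraph_of_forall_not_adj hG.preconnected
    (hR.not_adj_of_forall_mem_support ((vertexLoad_eq_iff _ x).1 hx))⟩

end Forwarding

theorem star_attains_upper_bound_and_unique_general {V : Type*} [Fintype V] [DecidableEq V] :
    (∀ c : V, Forwarding.xi (starGraph c) =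
        (Fintype.card V - 1) * (Fintype.card V - 2)) ∧
    (∀ G : SimpleGraph V, G.Connected →
      Forwarding.xi G = (Fintype.card V - 1) * (Fintype.card V - 2) →
      ∃ c : V, Nonempty (G ≃g starGraph c)) := by
  refine ⟨Forwarding.xi_starGraph, fun G hG h => ?_⟩
  obtain ⟨x, rfl⟩ := Forwarding.exists_eq_starGraph_of_xi_eq hG h
  exact ⟨x, ⟨.refl⟩⟩

/-- For `n ≥ 3`, the star `K_{1,n-1}` satisfies
`ξ(K_{1,n-1}) = (n-1)(n-2)`, and it is the unique connected graph on `n`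
vertices attaining this upper bound. -/
theorem star_attains_upper_bound_and_unique {V : Type*} [Fintype V] [DecidableEq V]
    (hn : 3 ≤ Fintype.card V) :
    (∀ c : V, Forwarding.xi (starGraph c) =
        (Fintype.card V - 1) * (Fintype.card V - 2)) ∧
    (∀ G : SimpleGraph V, G.Connected →
      Forwarding.xi G = (Fintype.card V - 1) * (Fintype.card V - 2) →
      ∃ c : V, Nonempty (G ≃g starGraph c)) :=
  star_attains_upper_bound_and_unique_general
end

section
/- Let Γ be a finite group of order n and S ⊆ Γ a generating set with S = S⁻¹ and 1 ∉ S, and let G = Cay(Γ,S) be the corresponding connected Cayley graph. Then ξ(G) = ξ_m(G) = Σ_{y∈Γ} d_G(x,y) − (n−1) for every vertex x of G (the value being independent of x). -/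
/-!
Counting internal vertices path by path, the total load of any routing is at least
`Σ_{u,v} (d(u,v) - 1)`, so its maximum load is at least the average `Σ_{u,v} (d(u,v) - 1) / n`.
Translating one family of shortest paths from `1` by left multiplication gives a minimal routing
on which `Γ` acts transitively, so all its loads are equal and it attains this average. Left
invariance of `d` makes `Σ_v (d(u,v) - 1)` independent of `u`, so the average equals
`Σ_y d(x,y) - (n - 1)`.
-/

open Finset

/-- The Cayley graph of a group `Γ` with respect to a symmetric connection
set `S` not containing `1`. -/
def cayleyGraph {Γ : Type*} [Group Γ] (S : Set Γ)
    (hsymm : ∀ s ∈ S, s⁻¹ ∈ S) (h1 : (1 : Γ) ∉ S) : SimpleGraph Γ where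
  Adj x y := x⁻¹ * y ∈ S
  symm := by
    constructor
    intro x y h
    have h' := hsymm _ h
    simpa [mul_inv_rev] using h'
  loopless := by
    constructor
    intro x h
    simp only [inv_mul_cancel] at h
    exact h1 h

namespace SimpleGraph

variable {V V' : Type*} {G : SimpleGraph V} {G' : SimpleGraph V'}

lemma Reachable.dist_map_le (f : G →g G') {u v : V} (h : G.Reachable u v) :
    G'.dist (f u) (f v) ≤ G.dist u v := by
  obtain ⟨p, hp⟩ := h.exists_walk_length_eq_dist
  exact (dist_le (p.map f)).trans_eq (by rw [Walk.length_map, hp])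

noncomputable def Connected.shortestWalk (hG : G.Connected) (u v : V) : G.Walk u v :=
  (hG.exists_walk_length_eq_dist u v).choose

lemma Connected.length_shortestWalk (hG : G.Connected) (u v : V) :
    (hG.shortestWalk u v).length = G.dist u v :=
  (hG.exists_walk_length_eq_dist u v).choose_spec

lemma Connected.sum_dist_sub_one [Fintype V] [DecidableEq V] (hG : G.Connected) (x : V) :
    ∑ y, (G.dist x y - 1) = ∑ y, G.dist x y - (Fintype.card V - 1) := by
  have hcard : #(univ.erase x) = Fintype.card V - 1 := by
    rw [card_erase_of_mem (mem_univ x), card_univ]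
  rw [← add_sum_erase _ _ (mem_univ x), ← add_sum_erase _ _ (mem_univ x), dist_self, ← hcard,
    card_eq_sum_ones]
  refine Nat.eq_sub_of_add_eq ?_
  simp only [zero_tsub, zero_add, ← sum_add_distrib]
  refine Finset.sum_congr rfl fun y hy => ?_
  have := hG.pos_dist_of_ne (ne_of_mem_erase hy).symm
  omega

end SimpleGraph

namespace Forwarding

variable {V : Type*} [Fintype V] [DecidableEq V] {G : SimpleGraph V}

lemma card_internal_eq_length_sub_one {u v : V} {w : G.Walk u v} (hw : w.IsPath) :
    #{x | u ≠ v ∧ x ∈ w.support ∧ x ≠ u ∧ x ≠ v} = w.length - 1 := by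
  rcases eq_or_ne u v with rfl | huv
  · simp [(SimpleGraph.Walk.isPath_iff_nil.mp hw).eq_nil]
  have hinternal : ({x | u ≠ v ∧ x ∈ w.support ∧ x ≠ u ∧ x ≠ v} : Finset V)
      = w.support.toFinset \ {u, v} := by
    ext x
    simp [huv]
  have hends : ({u, v} : Finset V) ⊆ w.support.toFinset := by
    simp [insert_subset_iff]
  rw [hinternal, card_sdiff_of_subset hends, List.toFinset_card_of_nodup hw.support_nodup,
    SimpleGraph.Walk.length_support, card_pair huv]
  omega

lemma sum_vertexLoad (R : Routing G) :
    ∑ x, vertexLoad R x = ∑ u, ∑ v, ((R.walk u v).length - 1) := by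
  simp only [vertexLoad, card_filter]
  rw [sum_comm, Fintype.sum_prod_type]
  refine Fintype.sum_congr _ _ fun u => Fintype.sum_congr _ _ fun v => ?_
  rw [← card_internal_eq_length_sub_one (R.isPath u v), card_filter]

lemma sum_vertexLoad_le (R : Routing G) :
    ∑ x, vertexLoad R x ≤ Fintype.card V * routingVertexIndex R := by
  simpa [routingVertexIndex] using
    sum_le_card_nsmul univ (vertexLoad R) _ fun x _ => le_sup (mem_univ x)

lemma sum_dist_sub_one_le (R : Routing G) :
    ∑ u, ∑ v, (G.dist u v - 1) ≤ Fintype.card V * routingVertexIndex R :=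
  calc ∑ u, ∑ v, (G.dist u v - 1)
      ≤ ∑ u, ∑ v, ((R.walk u v).length - 1) :=
        sum_le_sum fun _ _ => sum_le_sum fun _ _ => Nat.sub_le_sub_right (G.dist_le _) 1
    _ = ∑ x, vertexLoad R x := (sum_vertexLoad R).symm
    _ ≤ Fintype.card V * routingVertexIndex R := sum_vertexLoad_le R

lemma vertexLoad_apply_eq (R : Routing G) (φ : G ≃g G)
    (hR : ∀ u v, (R.walk (φ u) (φ v)).support = (R.walk u v).support.map φ) (x : V) :
    vertexLoad R (φ x) = vertexLoad R x := by
  simp only [vertexLoad, card_filter]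
  refine (Fintype.sum_equiv (φ.toEquiv.prodCongr φ.toEquiv) _ _ fun ⟨u, v⟩ => ?_).symm
  show _ = if φ u ≠ φ v ∧ φ x ∈ (R.walk (φ u) (φ v)).support ∧ φ x ≠ φ u ∧ φ x ≠ φ v
    then 1 else 0
  simp only [hR, List.mem_map_of_injective φ.injective, φ.injective.ne_iff]

lemma card_mul_routingVertexIndex {R : Routing G} (hmin : R.IsMinimal)
    (hload : ∀ x y, vertexLoad R x = vertexLoad R y) :
    Fintype.card V * routingVertexIndex R = ∑ u, ∑ v, (G.dist u v - 1) := by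
  have hmax : ∀ x, vertexLoad R x = routingVertexIndex R := fun x =>
    le_antisymm (le_sup (mem_univ x)) (Finset.sup_le fun y _ => (hload y x).le)
  have hlength : ∀ u v, (R.walk u v).length = G.dist u v := hmin
  calc Fintype.card V * routingVertexIndex R = ∑ x, vertexLoad R x := by
        simp only [hmax, sum_const, card_univ, smul_eq_mul]
    _ = ∑ u, ∑ v, (G.dist u v - 1) := by simp only [sum_vertexLoad, hlength]

lemma routingVertexIndex_le_of_isMinimal_of_vertexLoad_eq [Nonempty V] {R₀ : Routing G}
    (hmin : R₀.IsMinimal)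
    (hload : ∀ x y, vertexLoad R₀ x = vertexLoad R₀ y) (R : Routing G) :
    routingVertexIndex R₀ ≤ routingVertexIndex R := by
  refine Nat.le_of_mul_le_mul_left ?_ (Fintype.card_pos (α := V))
  rw [card_mul_routingVertexIndex hmin hload]
  exact sum_dist_sub_one_le R

lemma xi_eq_and_xiMin_eq {R₀ : Routing G} (hmin : R₀.IsMinimal)
    (hopt : ∀ R : Routing G, routingVertexIndex R₀ ≤ routingVertexIndex R) :
    xi G = routingVertexIndex R₀ ∧ xiMin G = routingVertexIndex R₀ :=
  ⟨le_antisymm (Nat.sInf_le ⟨R₀, rfl⟩) (le_csInf ⟨_, R₀, rfl⟩ fun _ ⟨R, hR⟩ => hR ▸ hopt R),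
    le_antisymm (Nat.sInf_le ⟨R₀, hmin, rfl⟩)
      (le_csInf ⟨_, R₀, hmin, rfl⟩ fun _ ⟨R, _, hR⟩ => hR ▸ hopt R)⟩

end Forwarding

namespace SimpleGraph

variable {Γ : Type*} [Group Γ] {G : SimpleGraph Γ}
  (hG : ∀ a u v : Γ, G.Adj (a * u) (a * v) ↔ G.Adj u v)
include hG

def mulLeftIso (a : Γ) : G ≃g G :=
  ⟨Equiv.mulLeft a, hG a _ _⟩

@[simp]
lemma mulLeftIso_apply (a u : Γ) : mulLeftIso hG a u = a * u := rfl

lemma connected_of_adj_one_of_closure_eq_top {S : Set Γ} (hS : ∀ s ∈ S, G.Adj 1 s)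
    (hgen : Subgroup.closure S = ⊤) : G.Connected := by
  have hreach (a b : Γ) (h : G.Reachable 1 b) : G.Reachable a (a * b) := by
    simpa using h.map (mulLeftIso hG a).toHom
  have hreach_one (g : Γ) : G.Reachable 1 g := by
    induction (hgen ▸ Subgroup.mem_top g : g ∈ Subgroup.closure S)
      using Subgroup.closure_induction with
    | mem s hs => exact (hS s hs).reachable
    | one => rfl
    | mul a b _ _ ha hb => exact ha.trans (hreach a b hb)
    | inv a _ ha => simpa using (hreach a⁻¹ a ha).symm
  exact ⟨fun u v => (hreach_one u).symm.trans (hreach_one v)⟩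

variable (hconn : G.Connected)
include hconn

lemma dist_mul_left (a u v : Γ) : G.dist (a * u) (a * v) = G.dist u v := by
  refine le_antisymm ((hconn u v).dist_map_le (mulLeftIso hG a).toHom) ?_
  simpa using (hconn (a * u) (a * v)).dist_map_le (mulLeftIso hG a⁻¹).toHom

lemma sum_comp_dist_eq {M : Type*} [AddCommMonoid M] [Fintype Γ] (f : ℕ → M) (u x : Γ) :
    ∑ v, f (G.dist u v) = ∑ v, f (G.dist x v) := by
  refine (Fintype.sum_equiv (Equiv.mulLeft (u * x⁻¹)) _ _ fun v => ?_).symm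
  show f (G.dist x v) = f (G.dist u (u * x⁻¹ * v))
  rw [← dist_mul_left hG hconn (u * x⁻¹) x v, inv_mul_cancel_right]

noncomputable def translationWalk (u v : Γ) : G.Walk u v :=
  ((hconn.shortestWalk 1 (u⁻¹ * v)).map (mulLeftIso hG u).toHom).copy (by simp) (by simp)

lemma length_translationWalk (u v : Γ) :
    (translationWalk hG hconn u v).length = G.dist u v := by
  rw [translationWalk, Walk.length_copy, Walk.length_map, Connected.length_shortestWalk,
    ← dist_mul_left hG hconn u, mul_one, mul_inv_cancel_left]

lemma support_translationWalk_mul_left (a u v : Γ) :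
    (translationWalk hG hconn (a * u) (a * v)).support
      = (translationWalk hG hconn u v).support.map (a * ·) := by
  simp only [translationWalk, Walk.support_copy, Walk.support_map, List.map_map]
  rw [show (a * u)⁻¹ * (a * v) = u⁻¹ * v by group]
  congr 1
  ext w
  simp [mul_assoc]

end SimpleGraph

namespace Forwarding

open SimpleGraph

variable {Γ : Type*} [Group Γ] {G : SimpleGraph Γ}
  (hG : ∀ a u v : Γ, G.Adj (a * u) (a * v) ↔ G.Adj u v) (hconn : G.Connected)

noncomputable def translationRouting : Routing G where
  walk := translationWalk hG hconn
  isPath u v := Walk.isPath_of_length_eq_dist _ (length_translationWalk hG hconn u v)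

lemma translationRouting_isMinimal : (translationRouting hG hconn).IsMinimal :=
  length_translationWalk hG hconn

lemma vertexLoad_translationRouting_eq [Fintype Γ] [DecidableEq Γ] (x y : Γ) :
    vertexLoad (translationRouting hG hconn) x = vertexLoad (translationRouting hG hconn) y := by
  simpa using vertexLoad_apply_eq (translationRouting hG hconn) (mulLeftIso hG (y * x⁻¹))
    (support_translationWalk_mul_left hG hconn (y * x⁻¹)) x |>.symm

end Forwarding

lemma cayleyGraph_adj_mul_left {Γ : Type*} [Group Γ] {S : Set Γ} {hsymm : ∀ s ∈ S, s⁻¹ ∈ S}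
    {h1 : (1 : Γ) ∉ S} (a u v : Γ) :
    (cayleyGraph S hsymm h1).Adj (a * u) (a * v) ↔ (cayleyGraph S hsymm h1).Adj u v := by
  change (a * u)⁻¹ * (a * v) ∈ S ↔ u⁻¹ * v ∈ S
  group

/-- For a connected Cayley graph `G = Cay(Γ,S)` on `n`
vertices, `ξ(G) = ξ_m(G) = Σ_{y ∈ Γ} d_G(x,y) - (n-1)` for every vertex `x`. -/
theorem cayley_forwarding_index {Γ : Type*} [Group Γ] [Fintype Γ] [DecidableEq Γ]
    (S : Set Γ) (hsymm : ∀ s ∈ S, s⁻¹ ∈ S) (h1 : (1 : Γ) ∉ S)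
    (hgen : Subgroup.closure S = ⊤) (x : Γ) :
    Forwarding.xi (cayleyGraph S hsymm h1) =
        (∑ y : Γ, (cayleyGraph S hsymm h1).dist x y) - (Fintype.card Γ - 1) ∧
    Forwarding.xiMin (cayleyGraph S hsymm h1) =
        (∑ y : Γ, (cayleyGraph S hsymm h1).dist x y) - (Fintype.card Γ - 1) := by
  set G := cayleyGraph S hsymm h1
  have hG : ∀ a u v : Γ, G.Adj (a * u) (a * v) ↔ G.Adj u v := cayleyGraph_adj_mul_left
  have hconn : G.Connected := G.connected_of_adj_one_of_closure_eq_top hG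
    (fun s hs => show 1⁻¹ * s ∈ S by simpa using hs) hgen
  set R₀ := Forwarding.translationRouting hG hconn
  have hmin : R₀.IsMinimal := Forwarding.translationRouting_isMinimal hG hconn
  have hload := Forwarding.vertexLoad_translationRouting_eq hG hconn
  have hindex : Forwarding.routingVertexIndex R₀ = ∑ y, G.dist x y - (Fintype.card Γ - 1) := by
    refine Nat.eq_of_mul_eq_mul_left (Fintype.card_pos (α := Γ)) ?_
    rw [Forwarding.card_mul_routingVertexIndex hmin hload, ← hconn.sum_dist_sub_one]
    simp_rw [G.sum_comp_dist_eq hG hconn (· - 1) _ x, sum_const, card_univ, smul_eq_mul]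
  exact hindex ▸ Forwarding.xi_eq_and_xiMin_eq hmin
    (Forwarding.routingVertexIndex_le_of_isMinimal_of_vertexLoad_eq hmin hload)
end

section
/- For every connected simple graph G on n vertices with maximum degree Δ ≥ 1, one has ξ(G) ≤ (n−1)(n−2) − (2n − 2 − Δ·⌊1 + (n−1)/Δ⌋)·⌊(n−1)/Δ⌋ (as an inequality of integers). -/
open Finset

/-! Route every pair along the unique path of a spanning tree `T ≤ G`. A tree path through `x` as an
internal vertex leaves `x` towards its two ends through two distinct neighbours of `x`, so the load
of `x` is at most the number of ordered pairs `(u, v)` of vertices other than `x` whose first steps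
from `x` differ. These first steps split the `n - 1` vertices other than `x` into at most `Δ`
classes, and the tangent-line bound `t² ≥ (2R + 1) t - R (R + 1)` at `R = ⌊(n - 1) / Δ⌋` bounds
the number of pairs inside a common class from below. -/

section Counting

open Finset

lemma Int.tangent_le_sq (t R : ℤ) : (2 * R + 1) * t - R * (R + 1) ≤ t ^ 2 := by
  -- the difference is the product `(t - R) (t - R - 1)` of two consecutive integers
  rcases le_or_gt t R with h | h <;> nlinarith

lemma Int.tangent_sum_le_sum_sq {ι : Type*} (s : Finset ι) (f : ι → ℤ) (R : ℤ) :
    (2 * R + 1) * ∑ i ∈ s, f i - #s * (R * (R + 1)) ≤ ∑ i ∈ s, f i ^ 2 := by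
  calc (2 * R + 1) * ∑ i ∈ s, f i - #s * (R * (R + 1))
      = ∑ i ∈ s, ((2 * R + 1) * f i - R * (R + 1)) := by
        rw [sum_sub_distrib, ← mul_sum, sum_const, nsmul_eq_mul]
    _ ≤ ∑ i ∈ s, f i ^ 2 := sum_le_sum fun i _ => Int.tangent_le_sq (f i) R

variable {α β : Type*} [DecidableEq β]

lemma card_filter_eq_product_eq_sum_sq {s : Finset α} {t : Finset β} {c : α → β}
    (hc : Set.MapsTo c s t) :
    #{p ∈ s ×ˢ s | c p.1 = c p.2} = ∑ b ∈ t, #{a ∈ s | c a = b} ^ 2 := by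
  have hc' : Set.MapsTo (fun p : α × α => c p.1) ↑{p ∈ s ×ˢ s | c p.1 = c p.2} t :=
    fun p hp => hc (mem_product.mp (mem_filter.mp hp).1).1
  rw [card_eq_sum_card_fiberwise hc']
  refine sum_congr rfl fun b _ => ?_
  rw [sq, ← card_product]
  congr 1
  ext ⟨u, v⟩
  simp only [mem_filter, mem_product]
  constructor
  · rintro ⟨⟨⟨hu, hv⟩, huv⟩, rfl⟩
    exact ⟨⟨hu, rfl⟩, hv, huv.symm⟩
  · rintro ⟨⟨hu, rfl⟩, hv, hvu⟩
    exact ⟨⟨⟨hu, hv⟩, hvu.symm⟩, rfl⟩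

lemma card_filter_ne_product_le {s : Finset α} {t : Finset β} {c : α → β}
    (hc : Set.MapsTo c s t) {Δ : ℕ} (ht : #t ≤ Δ) (R : ℤ) :
    (#{p ∈ s ×ˢ s | c p.1 ≠ c p.2} : ℤ) ≤
      (#s : ℤ) ^ 2 - (2 * R + 1) * #s + Δ * (R * (R + 1)) := by
  have hsplit : #{p ∈ s ×ˢ s | c p.1 ≠ c p.2} + ∑ b ∈ t, #{a ∈ s | c a = b} ^ 2 = #s ^ 2 := by
    rw [← card_filter_eq_product_eq_sum_sq hc, add_comm, card_filter_add_card_filter_not,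
      card_product, sq]
  have hsum : #s = ∑ b ∈ t, #{a ∈ s | c a = b} := card_eq_sum_card_fiberwise hc
  have hR : 0 ≤ R * (R + 1) := by rcases le_or_gt 0 R with h | h <;> nlinarith
  have hΔ : (#t : ℤ) * (R * (R + 1)) ≤ Δ * (R * (R + 1)) :=
    mul_le_mul_of_nonneg_right (by exact_mod_cast ht) hR
  have hsq := Int.tangent_sum_le_sum_sq t (fun b => (#{a ∈ s | c a = b} : ℤ)) R
  zify at hsplit hsum
  rw [← hsum] at hsq
  linarith

end Counting

namespace SimpleGraph.IsTree

variable {V : Type*} {T : SimpleGraph V} (hT : T.IsTree)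

noncomputable def path (u v : V) : T.Walk u v :=
  (hT.existsUnique_path u v).choose

lemma path_isPath (u v : V) : (hT.path u v).IsPath :=
  (hT.existsUnique_path u v).choose_spec.1

lemma eq_path {u v : V} {p : T.Walk u v} (hp : p.IsPath) : p = hT.path u v :=
  (hT.existsUnique_path u v).choose_spec.2 p hp

noncomputable def branch (x u : V) : V :=
  (hT.path x u).snd

lemma adj_branch {x u : V} (h : x ≠ u) : T.Adj x (hT.branch x u) :=
  Walk.adj_snd (Walk.not_nil_of_ne h)

lemma branch_ne_of_mem_support [DecidableEq V] {x u v : V} (hxv : x ≠ v)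
    (hx : x ∈ (hT.path u v).support) : hT.branch x u ≠ hT.branch x v := by
  set p := hT.path u v
  have hp : p.IsPath := hT.path_isPath u v
  have hu : hT.branch x u ∈ (p.takeUntil x hx).support := by
    rw [branch, ← hT.eq_path (hp.takeUntil hx).reverse, ← List.mem_reverse,
      ← Walk.support_reverse]
    exact Walk.getVert_mem_support _ 1
  have hv : hT.branch x v ∈ (p.dropUntil x hx).support.tail := by
    rw [branch, ← hT.eq_path (hp.dropUntil hx)]
    exact Walk.snd_mem_tail_support (Walk.not_nil_of_ne hxv)
  -- `p` splits at `x` into two paths whose supports share only `x`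
  have hnodup : ((p.takeUntil x hx).support ++ (p.dropUntil x hx).support.tail).Nodup := by
    rw [← Walk.support_append, Walk.take_spec p hx]
    exact hp.support_nodup
  exact fun h => List.disjoint_of_nodup_append hnodup hu (h ▸ hv)

end SimpleGraph.IsTree

namespace Forwarding

open Finset SimpleGraph

variable {V : Type*} [Fintype V] [DecidableEq V]

lemma exists_xi_le_vertexLoad [Nonempty V] {G : SimpleGraph V} (R : Routing G) :
    ∃ x, xi G ≤ vertexLoad R x := by
  obtain ⟨x, -, hx⟩ := exists_mem_eq_sup univ univ_nonempty (vertexLoad R)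
  exact ⟨x, hx ▸ Nat.sInf_le ⟨R, rfl⟩⟩

noncomputable def treeRouting {G T : SimpleGraph V} (hle : T ≤ G) (hT : T.IsTree) :
    Routing G where
  walk x y := (hT.path x y).mapLe hle
  isPath x y := (Walk.isPath_mapLe hle).mpr (hT.path_isPath x y)

lemma vertexLoad_treeRouting_le {G T : SimpleGraph V} (hle : T ≤ G) (hT : T.IsTree) (x : V) :
    vertexLoad (treeRouting hle hT) x ≤
      #{p ∈ univ.erase x ×ˢ univ.erase x | hT.branch x p.1 ≠ hT.branch x p.2} := by
  refine card_le_card fun p hp => ?_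
  simp only [mem_filter, mem_univ, true_and, treeRouting, Walk.support_mapLe_eq_support] at hp
  obtain ⟨-, hx, hx1, hx2⟩ := hp
  exact mem_filter.mpr ⟨mem_product.mpr ⟨mem_erase.mpr ⟨Ne.symm hx1, mem_univ _⟩,
    mem_erase.mpr ⟨Ne.symm hx2, mem_univ _⟩⟩, hT.branch_ne_of_mem_support hx2 hx⟩

lemma vertexLoad_treeRouting_le_of_maxDegree {G T : SimpleGraph V} [DecidableRel G.Adj]
    (hle : T ≤ G) (hT : T.IsTree) (x : V) (R : ℤ) :
    (vertexLoad (treeRouting hle hT) x : ℤ) ≤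
      ((Fintype.card V : ℤ) - 1) ^ 2 - (2 * R + 1) * ((Fintype.card V : ℤ) - 1) +
        G.maxDegree * (R * (R + 1)) := by
  have hbranch : Set.MapsTo (hT.branch x) ↑(univ.erase x) ↑(G.neighborFinset x) :=
    fun u hu => (mem_neighborFinset G x _).mpr (hle (hT.adj_branch (mem_erase.mp hu).1.symm))
  have hcard : (#(univ.erase x) : ℤ) = (Fintype.card V : ℤ) - 1 := by
    rw [card_erase_of_mem (mem_univ x), card_univ, Nat.cast_pred (Fintype.card_pos_iff.mpr ⟨x⟩)]
  rw [← hcard]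
  exact (Nat.cast_le.mpr (vertexLoad_treeRouting_le hle hT x)).trans
    (card_filter_ne_product_le hbranch (G.degree_le_maxDegree x) R)

end Forwarding

theorem xi_upper_bound_maxDegree_general {V : Type*} [Fintype V] [DecidableEq V]
    (G : SimpleGraph V) [DecidableRel G.Adj] (hG : G.Connected) :
    (Forwarding.xi G : ℤ) ≤
      ((Fintype.card V : ℤ) - 1) * ((Fintype.card V : ℤ) - 2) -
        (2 * (Fintype.card V : ℤ) - 2 - (G.maxDegree : ℤ) *
            ⌊1 + ((Fintype.card V : ℚ) - 1) / (G.maxDegree : ℚ)⌋) *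
          ⌊((Fintype.card V : ℚ) - 1) / (G.maxDegree : ℚ)⌋ := by
  have := hG.nonempty
  obtain ⟨T, hle, hT⟩ := hG.exists_isTree_le
  obtain ⟨x, hx⟩ := Forwarding.exists_xi_le_vertexLoad (Forwarding.treeRouting hle hT)
  set R := ⌊((Fintype.card V : ℚ) - 1) / (G.maxDegree : ℚ)⌋
  have hload := Forwarding.vertexLoad_treeRouting_le_of_maxDegree hle hT x R
  rw [add_comm, Int.floor_add_one]
  have hx' : (Forwarding.xi G : ℤ) ≤ Forwarding.vertexLoad (Forwarding.treeRouting hle hT) x := by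
    exact_mod_cast hx
  linarith

/-- For every connected graph `G` on `n` vertices with
maximum degree `Δ ≥ 1`,
`ξ(G) ≤ (n-1)(n-2) - (2n - 2 - Δ⌊1 + (n-1)/Δ⌋)⌊(n-1)/Δ⌋`. -/
theorem xi_upper_bound_maxDegree {V : Type*} [Fintype V] [DecidableEq V]
    (G : SimpleGraph V) [DecidableRel G.Adj] (hG : G.Connected)
    (hΔ : 1 ≤ G.maxDegree) :
    (Forwarding.xi G : ℤ) ≤
      ((Fintype.card V : ℤ) - 1) * ((Fintype.card V : ℤ) - 2) -
        (2 * (Fintype.card V : ℤ) - 2 - (G.maxDegree : ℤ) *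
            ⌊1 + ((Fintype.card V : ℚ) - 1) / (G.maxDegree : ℚ)⌋) *
          ⌊((Fintype.card V : ℚ) - 1) / (G.maxDegree : ℚ)⌋ :=
  xi_upper_bound_maxDegree_general G hG
end

section
/- Let G be a connected simple graph on n vertices with ε edges, maximum degree Δ, and diameter d. Then (a) ξ(G) ≤ ξ_m(G) ≤ (n−1)(n−2) − 2(ε − Δ), and (b) ξ(G) ≤ ξ_m(G) ≤ n² − 3n − ⌊d/2⌋² − ⌈d/2⌉² + d + 2 (as inequalities of integers). -/
open Finset

/-!
Take a minimal routing realising `ξ_m(G)` and a vertex `x` of maximum load. A shortest path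
between `u` and `v` can pass through `x` only if `d(u,x) + d(x,v) = d(u,v)`, so `ξ_m(G)` is at most
`(n-1)(n-2)` minus the number of ordered pairs `u ≠ v` with `d(u,v) < d(u,x) + d(x,v)`.
Every edge not incident to `x` gives two such pairs, which yields (a). For (b), take `a, b` at
distance `d` and shortest paths from `a` and from `b` to `x`. The first `r` vertices of the first
path and the first `d - r` vertices of the second are disjoint by the triangle inequality, and any
two vertices of one segment form such a pair; convexity of `k ↦ k²` finishes the count.
-/

namespace SimpleGraph.Walk

variable {V : Type*} {G : SimpleGraph V} {u v w : V} {p : G.Walk u v}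

theorem dist_start_getVert (hp : p.length = G.dist u v) (n : ℕ) :
    G.dist u (p.getVert n) = min n p.length := by
  rw [← length_eq_dist_of_subwalk hp (p.isSubwalk_take n), take_length]

theorem dist_getVert_end (hp : p.length = G.dist u v) (n : ℕ) :
    G.dist (p.getVert n) v = p.length - n := by
  rw [← length_eq_dist_of_subwalk hp (p.isSubwalk_drop n), drop_length]

theorem dist_getVert_getVert (hp : p.length = G.dist u v) {i j : ℕ} (hij : i ≤ j)
    (hj : j ≤ p.length) : G.dist (p.getVert i) (p.getVert j) = j - i := by
  have hdrop := length_eq_dist_of_subwalk hp (p.isSubwalk_drop i)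
  have := dist_start_getVert hdrop (j - i)
  rw [drop_getVert, drop_length, Nat.add_sub_cancel' hij] at this
  omega

theorem dist_add_dist_of_mem_support [DecidableEq V] (hp : p.length = G.dist u v)
    (hw : w ∈ p.support) : G.dist u w + G.dist w v = G.dist u v := by
  rw [← length_eq_dist_of_subwalk hp (p.isSubwalk_takeUntil hw),
    ← length_eq_dist_of_subwalk hp (p.isSubwalk_dropUntil hw), ← length_append,
    take_spec, hp]

end SimpleGraph.Walk

namespace Forwarding

theorem Routing.exists_isMinimal {V : Type*} {G : SimpleGraph V} (hG : G.Connected) :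
    ∃ R : Routing G, R.IsMinimal := by
  choose W hW using hG.exists_walk_length_eq_dist
  exact ⟨⟨W, fun u v => (W u v).isPath_of_length_eq_dist (hW u v)⟩, hW⟩

variable {V : Type*} [Fintype V] {G : SimpleGraph V}

/-- The ordered pairs that no shortest path can route through `x`. -/
noncomputable def detourPairs (G : SimpleGraph V) (x : V) : Finset (V × V) :=
  univ.offDiag.filter fun p => G.dist p.1 p.2 < G.dist p.1 x + G.dist x p.2

theorem mem_detourPairs {x : V} {p : V × V} :
    p ∈ detourPairs G x ↔ p.1 ≠ p.2 ∧ G.dist p.1 p.2 < G.dist p.1 x + G.dist x p.2 := by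
  simp [detourPairs]

variable [DecidableEq V]

theorem exists_isMinimal_routingVertexIndex_eq_xiMin (hG : G.Connected) :
    ∃ R : Routing G, R.IsMinimal ∧ routingVertexIndex R = xiMin G := by
  obtain ⟨R, hR⟩ := Routing.exists_isMinimal hG
  exact Nat.sInf_mem (s := {k | ∃ R : Routing G, R.IsMinimal ∧ routingVertexIndex R = k})
    ⟨_, R, hR, rfl⟩

theorem xi_le_xiMin (hG : G.Connected) : xi G ≤ xiMin G := by
  obtain ⟨R, -, hR⟩ := exists_isMinimal_routingVertexIndex_eq_xiMin hG
  exact Nat.sInf_le ⟨R, hR⟩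

theorem exists_vertexLoad_eq_routingVertexIndex [Nonempty V] (R : Routing G) :
    ∃ x, vertexLoad R x = routingVertexIndex R := by
  obtain ⟨x, -, hx⟩ := exists_mem_eq_sup univ univ_nonempty (vertexLoad R)
  exact ⟨x, hx.symm⟩

theorem detourPairs_subset_offDiag_erase (x : V) :
    detourPairs G x ⊆ (univ.erase x).offDiag := by
  intro p hp
  rw [mem_detourPairs] at hp
  have h1 : p.1 ≠ x := by rintro h; simp [h] at hp
  have h2 : p.2 ≠ x := by rintro h; simp [h] at hp
  simp [h1, h2, hp.1]

theorem vertexLoad_add_card_detourPairs_le {R : Routing G} (hR : R.IsMinimal) (x : V) :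
    (vertexLoad R x : ℤ) + #(detourPairs G x) ≤
      ((Fintype.card V : ℤ) - 1) * ((Fintype.card V : ℤ) - 2) := by
  set P := univ.filter fun p : V × V =>
    p.1 ≠ p.2 ∧ x ∈ (R.walk p.1 p.2).support ∧ x ≠ p.1 ∧ x ≠ p.2
  have hP : P ⊆ (univ.erase x).offDiag := by
    intro p hp
    simp only [P, mem_filter, mem_univ, true_and] at hp
    simp [hp.1, hp.2.2.1.symm, hp.2.2.2.symm]
  have hdisj : Disjoint P (detourPairs G x) := by
    refine disjoint_left.2 fun p hp hpD => ?_
    simp only [P, mem_filter, mem_univ, true_and] at hp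
    have := (R.walk p.1 p.2).dist_add_dist_of_mem_support (hR p.1 p.2) hp.2.1
    have := (mem_detourPairs.1 hpD).2
    omega
  have hcard := card_le_card (union_subset hP (detourPairs_subset_offDiag_erase (G := G) x))
  rw [card_union_of_disjoint hdisj, offDiag_card, card_erase_of_mem (mem_univ x),
    card_univ] at hcard
  have hn : 1 ≤ Fintype.card V := Fintype.card_pos_iff.2 ⟨x⟩
  zify [hn, Nat.le_mul_self (Fintype.card V - 1)] at hcard
  exact hcard.trans_eq (by ring)

theorem two_mul_card_edgeFinset_le [DecidableRel G.Adj] (hG : G.Connected) (x : V) :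
    2 * #G.edgeFinset ≤ #(detourPairs G x) + 2 * G.degree x := by
  have hsub : (univ.filter fun (p : V × V) ↦ G.Adj p.1 p.2) ⊆
      detourPairs G x ∪ ({x} ×ˢ G.neighborFinset x ∪ G.neighborFinset x ×ˢ {x}) := by
    rintro ⟨u, v⟩ huv
    simp only [mem_filter, mem_univ, true_and] at huv
    by_cases hu : u = x
    · subst hu; simp [huv]
    by_cases hv : v = x
    · subst hv; simp [huv.symm]
    have h1 := hG.pos_dist_of_ne hu
    have h2 := hG.pos_dist_of_ne (Ne.symm hv)
    have h3 : G.dist u v = 1 := SimpleGraph.dist_eq_one_iff_adj.2 huv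
    simp only [mem_union, mem_detourPairs]
    exact Or.inl ⟨huv.ne, by omega⟩
  calc 2 * #G.edgeFinset = #(univ.filter fun (p : V × V) ↦ G.Adj p.1 p.2) :=
        G.two_mul_card_edgeFinset
    _ ≤ #(detourPairs G x) + (#({x} ×ˢ G.neighborFinset x) + #(G.neighborFinset x ×ˢ {x})) :=
        (card_le_card hsub).trans <| (card_union_le _ _).trans <|
          Nat.add_le_add_left (card_union_le _ _) _
    _ = #(detourPairs G x) + 2 * G.degree x := by
        rw [card_product, card_product, card_singleton, one_mul, mul_one,
          G.card_neighborFinset_eq_degree, two_mul]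

/-- Witness: the first `r` vertices of a shortest walk from `a` to `x`. Any two of them lie on a
shortest path continuing to `x`, so no shortest path between them visits `x`. -/
theorem exists_card_eq_offDiag_subset_detourPairs {a x : V} (hax : G.Reachable a x) {r : ℕ}
    (hr : r ≤ G.dist a x) : ∃ Y : Finset V, #Y = r ∧ (∀ w ∈ Y, G.dist a w < r) ∧
      Y.offDiag ⊆ detourPairs G x := by
  obtain ⟨W, hW⟩ := hax.exists_walk_length_eq_dist
  have hdist : ∀ i ≤ W.length, G.dist a (W.getVert i) = i := fun i hi => by
    rw [W.dist_start_getVert hW, min_eq_left hi]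
  refine ⟨(range r).image W.getVert, ?_, ?_, ?_⟩
  · refine (card_image_of_injOn fun i hi j hj hij => ?_).trans (card_range r)
    simp only [coe_range, Set.mem_Iio] at hi hj
    rw [← hdist i (by omega), ← hdist j (by omega), hij]
  · simp only [mem_image, mem_range, forall_exists_index, and_imp]
    rintro _ i hi rfl
    rwa [hdist i (by omega)]
  · simp only [subset_iff, mem_offDiag, mem_image, mem_range, mem_detourPairs]
    rintro ⟨u, v⟩ ⟨⟨i, hi, rfl⟩, ⟨j, hj, rfl⟩, huv⟩
    refine ⟨huv, ?_⟩
    dsimp only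
    rw [SimpleGraph.dist_comm (u := x), W.dist_getVert_end hW, W.dist_getVert_end hW]
    rcases le_total i j with h | h
    · have := W.dist_getVert_getVert hW h (by omega)
      omega
    · have := W.dist_getVert_getVert hW h (by omega)
      rw [SimpleGraph.dist_comm] at this
      omega

theorem sq_half_add_sq_half_le {d r : ℕ} (hr : r ≤ d) :
    (d / 2) ^ 2 + ((d + 1) / 2) ^ 2 ≤ r ^ 2 + (d - r) ^ 2 := by
  obtain ⟨k, rfl⟩ := Nat.exists_eq_add_of_le hr
  rw [Nat.add_sub_cancel_left]
  rcases Nat.even_or_odd' (r + k) with ⟨m, hm | hm⟩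
  · have h1 : (r + k) / 2 = m := by omega
    have h2 : (r + k + 1) / 2 = m := by omega
    rw [h1, h2]
    nlinarith [sq_nonneg ((r : ℤ) - k)]
  · have h1 : (r + k) / 2 = m := by omega
    have h2 : (r + k + 1) / 2 = m + 1 := by omega
    rw [h1, h2]
    nlinarith [sq_nonneg ((r : ℤ) - k)]

theorem sq_half_diam_add_sq_half_diam_le (hG : G.Connected) (x : V) :
    (G.diam / 2) ^ 2 + ((G.diam + 1) / 2) ^ 2 ≤ #(detourPairs G x) + G.diam := by
  have : Nonempty V := ⟨x⟩
  obtain ⟨a, b, hab⟩ := G.exists_dist_eq_diam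
  have htri : G.diam ≤ G.dist a x + G.dist x b := hab ▸ hG.dist_triangle
  set r := min (G.dist a x) G.diam
  obtain ⟨Y, hYcard, hYa, hY⟩ :=
    exists_card_eq_offDiag_subset_detourPairs (r := r) (hG a x) (min_le_left _ _)
  obtain ⟨Z, hZcard, hZb, hZ⟩ := exists_card_eq_offDiag_subset_detourPairs (r := G.diam - r)
    (hG b x) (by rw [SimpleGraph.dist_comm]; omega)
  have hYZ : Disjoint Y Z := disjoint_left.2 fun w hwY hwZ => by
    have := hG.dist_triangle (u := a) (v := w) (w := b)
    have := hYa w hwY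
    have hbw := hZb w hwZ
    rw [SimpleGraph.dist_comm] at hbw
    omega
  have hdisj : Disjoint Y.offDiag Z.offDiag :=
    disjoint_left.2 fun _ hpY hpZ =>
      disjoint_left.1 hYZ (mem_offDiag.1 hpY).1 (mem_offDiag.1 hpZ).1
  have hcard := card_le_card (union_subset hY hZ)
  rw [card_union_of_disjoint hdisj, offDiag_card, offDiag_card, hYcard, hZcard] at hcard
  have hsq := sq_half_add_sq_half_le (d := G.diam) (r := r) (min_le_right _ _)
  have := Nat.sub_add_cancel (Nat.le_mul_self r)
  have := Nat.sub_add_cancel (Nat.le_mul_self (G.diam - r))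
  simp only [sq] at hsq ⊢
  omega

end Forwarding

/-- For a connected graph `G` on `n` vertices with `ε`
edges, maximum degree `Δ` and diameter `d`:
(a) `ξ(G) ≤ ξ_m(G) ≤ (n-1)(n-2) - 2(ε - Δ)`, and
(b) `ξ(G) ≤ ξ_m(G) ≤ n² - 3n - ⌊d/2⌋² - ⌈d/2⌉² + d + 2`. -/
theorem xiMin_upper_bounds {V : Type*} [Fintype V] [DecidableEq V]
    (G : SimpleGraph V) [DecidableRel G.Adj] (hG : G.Connected) :
    Forwarding.xi G ≤ Forwarding.xiMin G ∧
    (Forwarding.xiMin G : ℤ) ≤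
      ((Fintype.card V : ℤ) - 1) * ((Fintype.card V : ℤ) - 2) -
        2 * ((G.edgeFinset.card : ℤ) - (G.maxDegree : ℤ)) ∧
    (Forwarding.xiMin G : ℤ) ≤
      (Fintype.card V : ℤ) ^ 2 - 3 * (Fintype.card V : ℤ) -
        ((G.diam / 2 : ℕ) : ℤ) ^ 2 - (((G.diam + 1) / 2 : ℕ) : ℤ) ^ 2 +
        (G.diam : ℤ) + 2 := by
  open Forwarding in
  obtain ⟨R, hR, hRidx⟩ := exists_isMinimal_routingVertexIndex_eq_xiMin hG
  have : Nonempty V := hG.nonempty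
  obtain ⟨x, hx⟩ := exists_vertexLoad_eq_routingVertexIndex R
  have hload := vertexLoad_add_card_detourPairs_le hR x
  rw [hx, hRidx] at hload
  have hedges : 2 * (#G.edgeFinset : ℤ) ≤ #(detourPairs G x) + 2 * G.maxDegree := by
    exact_mod_cast (two_mul_card_edgeFinset_le hG x).trans
      (Nat.add_le_add_left (Nat.mul_le_mul_left 2 (G.degree_le_maxDegree x)) _)
  have hdiam : ((G.diam / 2 : ℕ) : ℤ) ^ 2 + (((G.diam + 1) / 2 : ℕ) : ℤ) ^ 2 ≤
      #(detourPairs G x) + G.diam := by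
    exact_mod_cast sq_half_diam_add_sq_half_diam_le hG x
  exact ⟨xi_le_xiMin hG, by linarith, by linarith⟩
end
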